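/- arXiv:1503.04068 — 10 statements merged into one kernel-verified Lean document; each statement's English description precedes it below -/
import Mathlib

section
/- Let G be a group, E a G-module, and ξ : G → E a function with ξ(1) = 0. Then the following are equivalent: (i) for all g, h ∈ G the function ∂_g(∂_h ξ) : G → E is constant; (ii) for all g, h, k ∈ G one has ξ(ghk) = ξ(gh) + g•ξ(hk) + (ghg⁻¹)•ξ(gk) − (ghg⁻¹)•ξ(g) − g•ξ(h) − (gh)•ξ(k). (Characterization of quadratic inhomogeneous 1-cocycles.) -/
/-- The (left) difference operator on `E`-valued functions on `G`:
`(∂_g ξ)(h) = g • ξ(g⁻¹h) - ξ(h)`. -/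
def mDiff {G E : Type*} [Group G] [AddCommGroup E] [DistribMulAction G E]
    (g : G) (ξ : G → E) : G → E :=
  fun h => g • ξ (g⁻¹ * h) - ξ h

/-- Characterization of quadratic inhomogeneous 1-cocycles: for `ξ : G → E` with
`ξ 1 = 0`, all second differences `∂_g (∂_h ξ)` are constant functions iff `ξ`
satisfies the explicit identity of Example "quadratic 1-cocycles". -/
theorem stmt2 {G E : Type*} [Group G] [AddCommGroup E] [DistribMulAction G E]
    (ξ : G → E) (hξ : ξ 1 = 0) :
    (∀ g h : G, ∃ c : E, ∀ k : G, mDiff g (mDiff h ξ) k = c) ↔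
    (∀ g h k : G, ξ (g * h * k) =
      ξ (g * h) + g • ξ (h * k) + (g * h * g⁻¹) • ξ (g * k)
        - (g * h * g⁻¹) • ξ g - g • ξ h - (g * h) • ξ k) := by
  constructor
  · intro H g h k
    obtain ⟨c, hc⟩ := H (g * h * g⁻¹) g
    have h1 := hc (g * h * k)
    have h2 := hc (g * h)
    have key := h1.trans h2.symm
    rw [← sub_eq_zero] at key ⊢
    simp only [mDiff, smul_sub, smul_smul, mul_inv_rev, inv_inv, mul_assoc,
      inv_mul_cancel_left, mul_inv_cancel_left, inv_mul_cancel, mul_inv_cancel,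
      one_mul, mul_one, hξ, smul_zero] at key ⊢
    abel_nf at key ⊢
    exact key
  · intro H g h
    refine ⟨ξ (g * h) - g • ξ h - h • ξ (h⁻¹ * (g * h)), fun k => ?_⟩
    have key := H h (h⁻¹ * (g * h)) ((g * h)⁻¹ * k)
    rw [← sub_eq_zero] at key ⊢
    simp only [mDiff, smul_sub, smul_smul, mul_inv_rev, inv_inv, mul_assoc,
      inv_mul_cancel_left, mul_inv_cancel_left, inv_mul_cancel, mul_inv_cancel,
      one_mul, mul_one, hξ, smul_zero] at key ⊢
    abel_nf at key ⊢
    exact key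
end

section
/- Let G be a topological group, d ∈ ℕ with d ≥ 1, and η : G → ℝ a continuous function. Define ξ_η : G × G → ℝ by ξ_η(g,h) = η(h) − η(g), let G act on functions F : G × G → ℝ by (g•F)(h,k) = F(g⁻¹h, g⁻¹k), and set ∂_g F := g•F − F. Then (∂_{g₁} ∘ ⋯ ∘ ∂_{g_d})(ξ_η) is identically zero for all g₁, …, g_d ∈ G if and only if η ∈ Pol_d(G), i.e. (∂_{g₁} ∘ ⋯ ∘ ∂_{g_{d+1}})(η) is identically zero for all g₁, …, g_{d+1} ∈ G. (This identifies the degree-d polynomial first cohomology H¹_{(d)}(G,ℝ) with Pol_d(G)/Pol_{d−1}(G).) -/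
/-
Taking differences commutes with the coboundary: applying `∂_{g₁} ∘ ⋯ ∘ ∂_{g_d}` to
`ξ_η(h, k) = η(k) - η(h)` gives `ξ_ψ` for `ψ = ∂_{g₁} ∘ ⋯ ∘ ∂_{g_d} η`. And `ξ_ψ` vanishes
iff `ψ` is constant iff `∂_g ψ = 0` for every `g`, since `(∂_{hk⁻¹} ψ)(h) = ψ(k) - ψ(h)`.
-/

/-- The left difference operator on real-valued functions on `G`:
`(∂_g ξ)(h) = ξ(g⁻¹h) - ξ(h)`. -/
def lDiff {G : Type*} [Group G] (g : G) (ξ : G → ℝ) : G → ℝ :=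
  fun h => ξ (g⁻¹ * h) - ξ h

/-- The difference operator for the diagonal action of `G` on functions on `G × G`:
`(∂_g F)(h,k) = F(g⁻¹h, g⁻¹k) - F(h,k)`. -/
def lDiff2 {G : Type*} [Group G] (g : G) (F : G × G → ℝ) : G × G → ℝ :=
  fun p => F (g⁻¹ * p.1, g⁻¹ * p.2) - F p

section

variable {G : Type*} [Group G]

def homogCoboundary (ψ : G → ℝ) : G × G → ℝ :=
  fun p => ψ p.2 - ψ p.1

theorem lDiff2_homogCoboundary (g : G) (ψ : G → ℝ) :
    lDiff2 g (homogCoboundary ψ) = homogCoboundary (lDiff g ψ) := by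
  funext p
  simp only [lDiff2, homogCoboundary, lDiff]
  ring

theorem foldr_lDiff2_homogCoboundary (gs : List G) (ψ : G → ℝ) :
    gs.foldr lDiff2 (homogCoboundary ψ) = homogCoboundary (gs.foldr lDiff ψ) := by
  induction gs with
  | nil => rfl
  | cons g gs ih => rw [List.foldr_cons, List.foldr_cons, ih, lDiff2_homogCoboundary]

theorem lDiff_mul_inv_apply (ψ : G → ℝ) (h k : G) :
    lDiff (h * k⁻¹) ψ h = ψ k - ψ h := by
  simp only [lDiff, mul_inv_rev, inv_inv, inv_mul_cancel_right]

theorem homogCoboundary_eq_zero_iff (ψ : G → ℝ) :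
    homogCoboundary ψ = 0 ↔ ∀ g, lDiff g ψ = 0 := by
  constructor
  · intro hψ g
    funext h
    simpa [homogCoboundary, lDiff] using congrFun hψ (h, g⁻¹ * h)
  · intro hψ
    funext p
    simpa [homogCoboundary, lDiff_mul_inv_apply] using congrFun (hψ (p.1 * p.2⁻¹)) p.1

end

theorem List.forall_length_eq_add_one_iff {α : Type*} {n : ℕ} (P : List α → Prop) :
    (∀ l : List α, l.length = n + 1 → P l) ↔ ∀ l : List α, l.length = n → ∀ a, P (a :: l) := by
  constructor
  · intro hP l hl a
    exact hP (a :: l) (by simp [hl])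
  · intro hP l hl
    obtain ⟨a, t, rfl⟩ := List.exists_of_length_succ l hl
    exact hP t (by simpa using hl) a

theorem stmt3_general {G : Type*} [Group G]
    (d : ℕ) (η : G → ℝ) :
    (∀ gs : List G, gs.length = d →
      gs.foldr lDiff2 (fun p : G × G => η p.2 - η p.1) = 0) ↔
    (∀ gs : List G, gs.length = d + 1 → gs.foldr lDiff η = 0) := by
  rw [List.forall_length_eq_add_one_iff]
  refine forall_congr' fun gs => imp_congr_right fun _ => ?_
  change gs.foldr lDiff2 (homogCoboundary η) = 0 ↔ _
  rw [foldr_lDiff2_homogCoboundary, homogCoboundary_eq_zero_iff]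
  rfl

/-- For a continuous `η : G → ℝ`, the homogeneous cochain `ξ_η(g,h) = η(h) - η(g)` has all
`d`-fold iterated differences identically zero iff `η` is a polynomial map of degree at
most `d`, i.e. all `(d+1)`-fold iterated differences of `η` vanish identically. -/
theorem stmt3 {G : Type*} [Group G] [TopologicalSpace G] [IsTopologicalGroup G]
    (d : ℕ) (hd : 1 ≤ d) (η : G → ℝ) (hη : Continuous η) :
    (∀ gs : List G, gs.length = d →
      gs.foldr lDiff2 (fun p : G × G => η p.2 - η p.1) = 0) ↔
    (∀ gs : List G, gs.length = d + 1 → gs.foldr lDiff η = 0) :=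
  stmt3_general d η
end

section
/- Let G be a group, d ∈ ℕ with d ≥ 1, s ∈ G, and let ξ : G → ℝ be a polynomial map of degree exactly d. Then the function φ : G → ℝ, φ(g) = (∂_g ξ)(s) = ξ(g⁻¹s) − ξ(s), is a polynomial map of degree exactly d, and likewise the function ψ : G → ℝ, ψ(g) = (∂'_g ξ)(s) = ξ(sg) − ξ(s), is a polynomial map of degree exactly d. -/
/-- `ξ` is a polynomial map of degree at most `d`: all `(d+1)`-fold iterated left
differences vanish identically. -/
def IsPolyLe {G : Type*} [Group G] (d : ℕ) (ξ : G → ℝ) : Prop :=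
  ∀ gs : List G, gs.length = d + 1 → gs.foldr lDiff ξ = 0

namespace Stmt4Aux

variable {G : Type*} [Group G]

/-- The right difference operator. -/
def rDiff (g : G) (ξ : G → ℝ) : G → ℝ := fun h => ξ (h * g) - ξ h

def P (n : ℕ) (ξ : G → ℝ) : Prop :=
  ∀ gs : List G, gs.length = n → gs.foldr lDiff ξ = 0

def Q (n : ℕ) (ξ : G → ℝ) : Prop :=
  ∀ rs : List G, rs.length = n → rs.foldr rDiff ξ = 0

lemma lDiff_rDiff (a g : G) (ξ : G → ℝ) :
    lDiff a (rDiff g ξ) = rDiff g (lDiff a ξ) := by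
  funext h; simp only [lDiff, rDiff, mul_assoc]; ring

lemma foldr_rDiff_lDiff (rs : List G) (a : G) (ξ : G → ℝ) :
    rs.foldr rDiff (lDiff a ξ) = lDiff a (rs.foldr rDiff ξ) := by
  induction rs with
  | nil => rfl
  | cons g rs ih => rw [List.foldr_cons, ih, List.foldr_cons, ← lDiff_rDiff]

lemma foldr_lDiff_rDiff (gs : List G) (a : G) (ξ : G → ℝ) :
    gs.foldr lDiff (rDiff a ξ) = rDiff a (gs.foldr lDiff ξ) := by
  induction gs with
  | nil => rfl
  | cons g gs ih => rw [List.foldr_cons, ih, List.foldr_cons, lDiff_rDiff]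

lemma P_lDiff {n : ℕ} {ξ : G → ℝ} (h : P (n + 1) ξ) (a : G) : P n (lDiff a ξ) := by
  intro gs hl
  have := h (gs ++ [a]) (by simp [hl])
  rwa [List.foldr_append] at this

lemma Q_rDiff {n : ℕ} {ξ : G → ℝ} (h : Q (n + 1) ξ) (a : G) : Q n (rDiff a ξ) := by
  intro rs hl
  have := h (rs ++ [a]) (by simp [hl])
  rwa [List.foldr_append] at this

lemma const_of_lDiff (F : G → ℝ) (hF : ∀ a, lDiff a F = 0) (h g : G) :
    F (h * g) = F h := by
  have := congrFun (hF (h * g⁻¹ * h⁻¹)) h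
  have e : (h * g⁻¹ * h⁻¹)⁻¹ * h = h * g := by group
  simp only [lDiff, e, Pi.zero_apply] at this
  linarith

lemma const_of_rDiff (F : G → ℝ) (hF : ∀ a, rDiff a F = 0) (a h : G) :
    F (a⁻¹ * h) = F h := by
  have := congrFun (hF (h⁻¹ * a⁻¹ * h)) h
  have e : h * (h⁻¹ * a⁻¹ * h) = a⁻¹ * h := by group
  simp only [rDiff, e, Pi.zero_apply] at this
  linarith

lemma P_to_Q : ∀ (rs : List G) (n : ℕ) (ξ : G → ℝ), P n ξ → rs.length = n →
    rs.foldr rDiff ξ = 0 := by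
  intro rs
  induction rs with
  | nil =>
    intro n ξ hP hl
    simp only [List.length_nil] at hl
    subst hl
    exact hP [] rfl
  | cons g rs ih =>
    intro n ξ hP hl
    simp only [List.length_cons] at hl
    subst hl
    have hF : ∀ a, lDiff a (rs.foldr rDiff ξ) = 0 := fun a => by
      rw [← foldr_rDiff_lDiff]
      exact ih rs.length (lDiff a ξ) (P_lDiff hP a) rfl
    funext h
    show rDiff g (rs.foldr rDiff ξ) h = 0
    simp [rDiff, const_of_lDiff _ hF h g]

lemma Q_to_P : ∀ (gs : List G) (n : ℕ) (ξ : G → ℝ), Q n ξ → gs.length = n →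
    gs.foldr lDiff ξ = 0 := by
  intro gs
  induction gs with
  | nil =>
    intro n ξ hQ hl
    simp only [List.length_nil] at hl
    subst hl
    exact hQ [] rfl
  | cons g gs ih =>
    intro n ξ hQ hl
    simp only [List.length_cons] at hl
    subst hl
    have hF : ∀ a, rDiff a (gs.foldr lDiff ξ) = 0 := fun a => by
      rw [← foldr_lDiff_rDiff]
      exact ih gs.length (rDiff a ξ) (Q_rDiff hQ a) rfl
    funext h
    show lDiff g (gs.foldr lDiff ξ) h = 0
    simp [lDiff, const_of_rDiff _ hF g h]

lemma P_iff_Q (n : ℕ) (ξ : G → ℝ) : P n ξ ↔ Q n ξ :=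
  ⟨fun h rs hl => P_to_Q rs n ξ h hl, fun h gs hl => Q_to_P gs n ξ h hl⟩

lemma foldr_lDiff_inv (gs : List G) (ξ : G → ℝ) :
    gs.foldr lDiff (fun g => ξ g⁻¹) = fun h => gs.foldr rDiff ξ h⁻¹ := by
  induction gs with
  | nil => rfl
  | cons a gs ih =>
    funext h
    simp only [List.foldr_cons, ih, lDiff, rDiff, mul_inv_rev, inv_inv]

lemma P_inv_iff (n : ℕ) (ξ : G → ℝ) : P n (fun g => ξ g⁻¹) ↔ Q n ξ := by
  constructor
  · intro h rs hl
    have := h rs hl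
    rw [foldr_lDiff_inv] at this
    funext x
    have := congrFun this x⁻¹
    simpa using this
  · intro h gs hl
    rw [foldr_lDiff_inv, h gs hl]
    rfl

lemma foldr_lDiff_lmul (gs : List G) (s : G) (ξ : G → ℝ) :
    gs.foldr lDiff (fun g => ξ (s * g)) =
      fun h => (gs.map (fun g => s * g * s⁻¹)).foldr lDiff ξ (s * h) := by
  induction gs with
  | nil => rfl
  | cons a gs ih =>
    funext h
    simp only [List.foldr_cons, List.map_cons, ih, lDiff]
    have e : (s * a * s⁻¹)⁻¹ * (s * h) = s * (a⁻¹ * h) := by group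
    rw [e]

lemma P_lmul {n : ℕ} (s : G) {ξ : G → ℝ} (h : P n ξ) :
    P n (fun g => ξ (s * g)) := by
  intro gs hl
  rw [foldr_lDiff_lmul]
  have := h (gs.map (fun g => s * g * s⁻¹)) (by simp [hl])
  funext x
  simp [this]

lemma P_lmul_iff (n : ℕ) (s : G) (ξ : G → ℝ) :
    P n (fun g => ξ (s * g)) ↔ P n ξ := by
  constructor
  · intro h
    have := P_lmul s⁻¹ h
    simpa using this
  · exact P_lmul s

lemma foldr_lDiff_sub_const (gs : List G) (hgs : gs ≠ []) (ξ : G → ℝ) (c : ℝ) :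
    gs.foldr lDiff (fun g => ξ g - c) = gs.foldr lDiff ξ := by
  induction gs with
  | nil => exact absurd rfl hgs
  | cons a gs ih =>
    cases gs with
    | nil =>
      funext h
      simp only [List.foldr_cons, List.foldr_nil, lDiff]
      ring
    | cons b gs' =>
      rw [List.foldr_cons, ih (by simp), List.foldr_cons]
      rfl

lemma P_sub_const_iff {n : ℕ} (hn : 1 ≤ n) (ξ : G → ℝ) (c : ℝ) :
    P n (fun g => ξ g - c) ↔ P n ξ := by
  constructor
  · intro h gs hl
    have hne : gs ≠ [] := by rintro rfl; simp at hl; omega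
    rw [← foldr_lDiff_sub_const gs hne ξ c]
    exact h gs hl
  · intro h gs hl
    have hne : gs ≠ [] := by rintro rfl; simp at hl; omega
    rw [foldr_lDiff_sub_const gs hne ξ c]
    exact h gs hl

end Stmt4Aux

/-- If `ξ : G → ℝ` is a polynomial map of degree exactly `d ≥ 1`, then for any `s ∈ G`,
both `g ↦ (∂_g ξ)(s) = ξ(g⁻¹s) - ξ(s)` and `g ↦ (∂'_g ξ)(s) = ξ(sg) - ξ(s)` are
polynomial maps of degree exactly `d`. -/
theorem stmt4 {G : Type*} [Group G] (d : ℕ) (hd : 1 ≤ d) (s : G) (ξ : G → ℝ)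
    (h₁ : IsPolyLe d ξ) (h₂ : ¬ IsPolyLe (d - 1) ξ) :
    (IsPolyLe d (fun g => ξ (g⁻¹ * s) - ξ s) ∧
      ¬ IsPolyLe (d - 1) (fun g => ξ (g⁻¹ * s) - ξ s)) ∧
    (IsPolyLe d (fun g => ξ (s * g) - ξ s) ∧
      ¬ IsPolyLe (d - 1) (fun g => ξ (s * g) - ξ s)) := by
  open Stmt4Aux in
  have hd' : d - 1 + 1 = d := by omega
  -- translate everything into `P`
  have hP : P (d + 1) ξ := h₁
  have hnP : ¬ P d ξ := by
    intro h
    exact h₂ (by intro gs hl; exact h gs (by omega))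
  -- equivalence for ψ
  have hψ : ∀ n, 1 ≤ n → (P n (fun g => ξ (s * g) - ξ s) ↔ P n ξ) := by
    intro n hn
    exact (P_sub_const_iff hn (fun g => ξ (s * g)) (ξ s)).trans (P_lmul_iff n s ξ)
  -- equivalence for φ
  have hfun : (fun g : G => ξ (g⁻¹ * s) - ξ s) =
      (fun g : G => (fun x : G => ξ x⁻¹) (s⁻¹ * g) - ξ s) := by
    funext g
    simp [mul_inv_rev]
  have hφ : ∀ n, 1 ≤ n → (P n (fun g => ξ (g⁻¹ * s) - ξ s) ↔ P n ξ) := by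
    intro n hn
    rw [hfun]
    exact (P_sub_const_iff hn (fun g => (fun x : G => ξ x⁻¹) (s⁻¹ * g)) (ξ s)).trans
      ((P_lmul_iff n s⁻¹ (fun x : G => ξ x⁻¹)).trans
        ((P_inv_iff n ξ).trans (P_iff_Q n ξ).symm))
  refine ⟨⟨?_, ?_⟩, ?_, ?_⟩
  · exact (hφ (d + 1) (by omega)).mpr hP
  · intro h
    have : P d (fun g => ξ (g⁻¹ * s) - ξ s) := by
      intro gs hl; exact h gs (by omega)
    exact hnP ((hφ d hd).mp this)
  · exact (hψ (d + 1) (by omega)).mpr hP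
  · intro h
    have : P d (fun g => ξ (s * g) - ξ s) := by
      intro gs hl; exact h gs (by omega)
    exact hnP ((hψ d hd).mp this)
end

section
/- Let G be a group, d ∈ ℕ, and ξ : G → ℝ a function. Then the iterated left difference (∂_{g₁} ∘ ⋯ ∘ ∂_{g_{d+1}})(ξ) is identically zero for all g₁, …, g_{d+1} ∈ G if and only if the iterated right difference (∂'_{g₁} ∘ ⋯ ∘ ∂'_{g_{d+1}})(ξ) is identically zero for all g₁, …, g_{d+1} ∈ G. (Left-polynomial maps and right-polynomial maps into ℝ coincide, with the same degree.) -/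
/-- The right difference operator: `(∂'_g ξ)(h) = ξ(hg) - ξ(h)`. -/
def rDiff {G : Type*} [Group G] (g : G) (ξ : G → ℝ) : G → ℝ :=
  fun h => ξ (h * g) - ξ h

lemma lr_comm {G : Type*} [Group G] (k g : G) (ξ : G → ℝ) :
    lDiff k (rDiff g ξ) = rDiff g (lDiff k ξ) := by
  funext h
  simp only [lDiff, rDiff, mul_assoc]
  ring

lemma fold_l_rDiff {G : Type*} [Group G] (g : G) (ξ : G → ℝ) (gs : List G) :
    gs.foldr lDiff (rDiff g ξ) = rDiff g (gs.foldr lDiff ξ) := by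
  induction gs with
  | nil => rfl
  | cons a l ih => simp [List.foldr, ih, lr_comm]

lemma fold_r_lDiff {G : Type*} [Group G] (g : G) (ξ : G → ℝ) (gs : List G) :
    gs.foldr rDiff (lDiff g ξ) = lDiff g (gs.foldr rDiff ξ) := by
  induction gs with
  | nil => rfl
  | cons a l ih => simp [List.foldr, ih, ← lr_comm]

lemma const_of_lconst {G : Type*} [Group G] {η : G → ℝ}
    (h : ∀ k : G, lDiff k η = 0) (x y : G) : η x = η y := by
  have := congrFun (h (x * y⁻¹)) x
  simp only [lDiff, Pi.zero_apply, sub_eq_zero] at this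
  rw [← this]
  congr 1
  group

lemma const_of_rconst {G : Type*} [Group G] {η : G → ℝ}
    (h : ∀ k : G, rDiff k η = 0) (x y : G) : η x = η y := by
  have := congrFun (h (x⁻¹ * y)) x
  simp only [rDiff, Pi.zero_apply, sub_eq_zero] at this
  rw [← this]
  congr 1
  group

lemma rconst_of_lconst {G : Type*} [Group G] {η : G → ℝ}
    (h : ∀ k : G, lDiff k η = 0) (g : G) : rDiff g η = 0 := by
  funext x
  simp only [rDiff, Pi.zero_apply, sub_eq_zero]
  exact const_of_lconst h _ _

lemma lconst_of_rconst {G : Type*} [Group G] {η : G → ℝ}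
    (h : ∀ k : G, rDiff k η = 0) (g : G) : lDiff g η = 0 := by
  funext x
  simp only [lDiff, Pi.zero_apply, sub_eq_zero]
  exact const_of_rconst h _ _

lemma ltr {G : Type*} [Group G] : ∀ (d : ℕ) (ξ : G → ℝ),
    (∀ gs : List G, gs.length = d + 1 → gs.foldr lDiff ξ = 0) →
    ∀ gs : List G, gs.length = d + 1 → gs.foldr rDiff ξ = 0 := by
  intro d
  induction d with
  | zero =>
    intro ξ hP gs hlen
    match gs, hlen with
    | [g], _ =>
      show rDiff g ξ = 0
      exact rconst_of_lconst (fun k => hP [k] rfl) g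
  | succ d ih =>
    intro ξ hP gs hlen
    rcases List.eq_nil_or_concat gs with rfl | ⟨l, g, rfl⟩
    · simp at hlen
    · have hl : l.length = d + 1 := by
        simpa [List.concat_eq_append] using hlen
      rw [List.concat_eq_append, List.foldr_append]
      show l.foldr rDiff (rDiff g ξ) = 0
      apply ih (rDiff g ξ)
      · intro gs' hlen'
        rw [fold_l_rDiff]
        exact rconst_of_lconst
          (fun k => hP (k :: gs') (by simp [hlen'])) g
      · exact hl

lemma rtl {G : Type*} [Group G] : ∀ (d : ℕ) (ξ : G → ℝ),
    (∀ gs : List G, gs.length = d + 1 → gs.foldr rDiff ξ = 0) →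
    ∀ gs : List G, gs.length = d + 1 → gs.foldr lDiff ξ = 0 := by
  intro d
  induction d with
  | zero =>
    intro ξ hP gs hlen
    match gs, hlen with
    | [g], _ =>
      show lDiff g ξ = 0
      exact lconst_of_rconst (fun k => hP [k] rfl) g
  | succ d ih =>
    intro ξ hP gs hlen
    rcases List.eq_nil_or_concat gs with rfl | ⟨l, g, rfl⟩
    · simp at hlen
    · have hl : l.length = d + 1 := by
        simpa [List.concat_eq_append] using hlen
      rw [List.concat_eq_append, List.foldr_append]
      show l.foldr lDiff (lDiff g ξ) = 0
      apply ih (lDiff g ξ)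
      · intro gs' hlen'
        rw [fold_r_lDiff]
        exact lconst_of_rconst
          (fun k => hP (k :: gs') (by simp [hlen'])) g
      · exact hl

/-- Left-polynomial maps and right-polynomial maps into `ℝ` coincide, with the same
degree: all `(d+1)`-fold iterated left differences of `ξ` vanish identically iff all
`(d+1)`-fold iterated right differences vanish identically. -/
theorem stmt6 {G : Type*} [Group G] (d : ℕ) (ξ : G → ℝ) :
    (∀ gs : List G, gs.length = d + 1 → gs.foldr lDiff ξ = 0) ↔
    (∀ gs : List G, gs.length = d + 1 → gs.foldr rDiff ξ = 0) := by
  exact ⟨ltr d ξ, rtl d ξ⟩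
end

section
/- Let G be a finitely generated torsion-free nilpotent group, d ∈ ℕ, and ξ ∈ Pol_d(G). Let k ≥ 1 and let g be an element of the k-th term γ_k(G) of the lower central series of G (γ₁(G) = G, γ_{k+1}(G) = [G, γ_k(G)]). Then: if k ≤ d, the function ∂_g ξ belongs to Pol_{d−k}(G); and if k > d, then ∂_g ξ is identically zero. The same conclusions hold for the right difference ∂'_g ξ. -/
/-- Torsion-free monoid (removed from Mathlib; old definition restored):
no nontrivial element has finite order. -/
def Monoid.IsTorsionFree (G : Type*) [Monoid G] : Prop :=
  ∀ g : G, g ≠ 1 → ¬IsOfFinOrder g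

/-!
Writing `T_a ξ = ξ(a⁻¹ ·)`, we have `∂_{ab} = ∂_a + T_a ∂_b` and `∂_{hgh⁻¹} = T_h ∂_g T_{h⁻¹}`,
and polynomial maps of a given degree are translation invariant. Hence the elements `g` for which
`∂_g` lowers the degree of every polynomial map by `m` form a normal subgroup `D_m`. Every `∂_g`
lowers the degree by one, so `D_1 = G`, and the identity
`∂_{[x,y]} = T_{xy} (∂_{x⁻¹} ∂_{y⁻¹} - ∂_{y⁻¹} ∂_{x⁻¹})` gives `[D_a, D_b] ≤ D_{a+b}`;
thus `γ_k(G) ≤ D_k`. Right differences reduce to left ones through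
`(∂'_g ξ)(h) = (∂_{hg⁻¹h⁻¹} ξ)(h)` and the normality of `D_m`.
-/

section

variable {G : Type*} [Group G]

open scoped commutatorElement

def lTranslate (a : G) (ξ : G → ℝ) : G → ℝ := fun h => ξ (a⁻¹ * h)

def lDiffHom (g : G) : AddMonoid.End (G → ℝ) where
  toFun := lDiff g
  map_zero' := by ext; simp [lDiff]
  map_add' _ _ := by ext; simp only [lDiff, Pi.add_apply]; ring

theorem foldr_lDiff_eq_prod (gs : List G) (ξ : G → ℝ) :
    gs.foldr lDiff ξ = (gs.map lDiffHom).prod ξ := by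
  induction gs with
  | nil => rfl
  | cons g gs ih =>
    rw [List.foldr_cons, ih, List.map_cons, List.prod_cons, AddMonoid.End.coe_mul]
    rfl

theorem lDiff_one (ξ : G → ℝ) : lDiff 1 ξ = 0 := by
  ext; simp [lDiff]

theorem lDiff_mul (a b : G) (ξ : G → ℝ) :
    lDiff (a * b) ξ = lDiff a ξ + lTranslate a (lDiff b ξ) := by
  ext; simp [lDiff, lTranslate, mul_assoc]

theorem lDiff_inv (a : G) (ξ : G → ℝ) : lDiff a⁻¹ ξ = -lTranslate a⁻¹ (lDiff a ξ) := by
  ext; simp [lDiff, lTranslate]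

theorem lDiff_commutatorElement (x y : G) (ξ : G → ℝ) :
    lDiff ⁅x, y⁆ ξ = lTranslate (x * y) (lDiff x⁻¹ (lDiff y⁻¹ ξ) - lDiff y⁻¹ (lDiff x⁻¹ ξ)) := by
  ext; simp [commutatorElement_def, lDiff, lTranslate, mul_assoc]; ring

theorem lDiff_lTranslate (a b : G) (ξ : G → ℝ) :
    lDiff b (lTranslate a ξ) = lTranslate a (lDiff (a⁻¹ * b * a) ξ) := by
  ext; simp [lDiff, lTranslate, mul_assoc]

theorem lDiff_conj (h g : G) (ξ : G → ℝ) :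
    lDiff (h * g * h⁻¹) ξ = lTranslate h (lDiff g (lTranslate h⁻¹ ξ)) := by
  ext; simp [lDiff, lTranslate, mul_assoc]

theorem foldr_lDiff_lTranslate (gs : List G) (a : G) (ξ : G → ℝ) :
    gs.foldr lDiff (lTranslate a ξ) = lTranslate a ((gs.map (a⁻¹ * · * a)).foldr lDiff ξ) := by
  induction gs with
  | nil => rfl
  | cons g gs ih => rw [List.foldr_cons, ih, lDiff_lTranslate]; rfl

theorem lDiff_rDiff (a g : G) (ξ : G → ℝ) : lDiff a (rDiff g ξ) = rDiff g (lDiff a ξ) := by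
  ext; simp only [lDiff, rDiff, mul_assoc]; ring

theorem foldr_lDiff_rDiff (gs : List G) (g : G) (ξ : G → ℝ) :
    gs.foldr lDiff (rDiff g ξ) = rDiff g (gs.foldr lDiff ξ) := by
  induction gs with
  | nil => rfl
  | cons a gs ih => rw [List.foldr_cons, ih, lDiff_rDiff]; rfl

theorem rDiff_apply_eq_lDiff_conj (g : G) (ξ : G → ℝ) (h : G) :
    rDiff g ξ h = lDiff (h * g⁻¹ * h⁻¹) ξ h := by
  simp [lDiff, rDiff, mul_assoc]

variable (G) in
/-- Polynomial maps of degree `< n`; in particular `polyLt G 0 = ⊥`, so with truncated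
subtraction "degree `< n - m`" also covers the case where a difference vanishes. -/
def polyLt (n : ℕ) : AddSubgroup (G → ℝ) where
  carrier := {ξ | ∀ gs : List G, gs.length = n → gs.foldr lDiff ξ = 0}
  zero_mem' gs _ := by rw [foldr_lDiff_eq_prod, map_zero]
  add_mem' hξ hη gs hgs := by
    rw [foldr_lDiff_eq_prod, map_add, ← foldr_lDiff_eq_prod, ← foldr_lDiff_eq_prod,
      hξ gs hgs, hη gs hgs, add_zero]
  neg_mem' hξ gs hgs := by
    rw [foldr_lDiff_eq_prod, map_neg, ← foldr_lDiff_eq_prod, hξ gs hgs, neg_zero]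

theorem isPolyLe_iff_mem_polyLt {d : ℕ} {ξ : G → ℝ} : IsPolyLe d ξ ↔ ξ ∈ polyLt G (d + 1) :=
  Iff.rfl

theorem mem_polyLt_zero {ξ : G → ℝ} : ξ ∈ polyLt G 0 ↔ ξ = 0 :=
  ⟨fun hξ => hξ [] rfl, fun hξ => hξ ▸ zero_mem _⟩

theorem foldr_lDiff_eq_zero_of_mem_polyLt {n : ℕ} {ξ : G → ℝ} (hξ : ξ ∈ polyLt G n)
    {gs : List G} (hgs : n ≤ gs.length) : gs.foldr lDiff ξ = 0 := by
  rw [← List.take_append_drop (gs.length - n) gs, List.foldr_append,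
    hξ _ (by simp only [List.length_drop]; omega), foldr_lDiff_eq_prod, map_zero]

theorem foldr_lDiff_mem_polyLt {n : ℕ} {ξ : G → ℝ} (hξ : ξ ∈ polyLt G n) (gs : List G) :
    gs.foldr lDiff ξ ∈ polyLt G (n - gs.length) := fun hs hhs => by
  rw [← List.foldr_append]
  exact foldr_lDiff_eq_zero_of_mem_polyLt hξ (by simp only [List.length_append]; omega)

theorem lDiff_mem_polyLt {n : ℕ} {ξ : G → ℝ} (hξ : ξ ∈ polyLt G n) (g : G) :
    lDiff g ξ ∈ polyLt G (n - 1) :=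
  foldr_lDiff_mem_polyLt hξ [g]

theorem lTranslate_mem_polyLt {n : ℕ} {ξ : G → ℝ} (hξ : ξ ∈ polyLt G n) (a : G) :
    lTranslate a ξ ∈ polyLt G n := fun gs hgs => by
  rw [foldr_lDiff_lTranslate, hξ _ (by rw [List.length_map, hgs])]
  rfl

variable (G) in
def degreeLowering (m : ℕ) : Subgroup G where
  carrier := {g | ∀ n, ∀ ξ ∈ polyLt G n, lDiff g ξ ∈ polyLt G (n - m)}
  one_mem' n ξ _ := by rw [lDiff_one]; exact zero_mem _
  mul_mem' ha hb n ξ hξ := by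
    rw [lDiff_mul]; exact add_mem (ha n ξ hξ) (lTranslate_mem_polyLt (hb n ξ hξ) _)
  inv_mem' ha n ξ hξ := by
    rw [lDiff_inv]; exact neg_mem (lTranslate_mem_polyLt (ha n ξ hξ) _)

instance degreeLowering_normal (m : ℕ) : (degreeLowering G m).Normal where
  conj_mem g hg h n ξ hξ := by
    rw [lDiff_conj]
    exact lTranslate_mem_polyLt (hg n _ (lTranslate_mem_polyLt hξ _)) _

theorem degreeLowering_one : degreeLowering G 1 = ⊤ :=
  eq_top_iff.2 fun g _ _ _ hξ => lDiff_mem_polyLt hξ g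

theorem commutator_degreeLowering_le (a b : ℕ) :
    ⁅degreeLowering G a, degreeLowering G b⁆ ≤ degreeLowering G (a + b) := by
  refine Subgroup.commutator_le.2 fun x hx y hy n ξ hξ => ?_
  have hxy : lDiff x⁻¹ (lDiff y⁻¹ ξ) ∈ polyLt G (n - (a + b)) := by
    rw [Nat.sub_add_eq, Nat.sub_right_comm]
    exact inv_mem hx _ _ (inv_mem hy _ _ hξ)
  have hyx : lDiff y⁻¹ (lDiff x⁻¹ ξ) ∈ polyLt G (n - (a + b)) := by
    rw [Nat.sub_add_eq]
    exact inv_mem hy _ _ (inv_mem hx _ _ hξ)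
  rw [lDiff_commutatorElement]
  exact lTranslate_mem_polyLt (sub_mem hxy hyx) _

theorem lowerCentralSeries_le_degreeLowering (S : Subgroup G) (j : ℕ) :
    S.lowerCentralSeries j ≤ degreeLowering G (j + 1) := by
  induction j with
  | zero => simp [degreeLowering_one]
  | succ j ih =>
    calc S.lowerCentralSeries (j + 1) = ⁅S.lowerCentralSeries j, S⁆ := rfl
      _ ≤ ⁅degreeLowering G (j + 1), degreeLowering G 1⁆ :=
        Subgroup.commutator_mono ih (degreeLowering_one (G := G) ▸ le_top)
      _ ≤ degreeLowering G (j + 1 + 1) := commutator_degreeLowering_le _ _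

theorem rDiff_mem_polyLt {m n : ℕ} {g : G} (hg : g ∈ degreeLowering G m) {ξ : G → ℝ}
    (hξ : ξ ∈ polyLt G n) : rDiff g ξ ∈ polyLt G (n - m) := fun gs hgs => by
  rw [foldr_lDiff_rDiff]
  ext h
  have hconj : h * g⁻¹ * h⁻¹ ∈ degreeLowering G m :=
    (degreeLowering_normal m).conj_mem _ (inv_mem hg) h
  have hvanish := hconj _ _ (foldr_lDiff_mem_polyLt hξ gs)
  rw [show n - gs.length - m = 0 by omega, mem_polyLt_zero] at hvanish
  rw [rDiff_apply_eq_lDiff_conj, hvanish]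

end

theorem stmt8_general {G : Type*} [Group G]
    (d : ℕ) (ξ : G → ℝ) (hξ : IsPolyLe d ξ)
    (k : ℕ) (hk : 1 ≤ k) (g : G) (hg : g ∈ (⊤ : Subgroup G).lowerCentralSeries (k - 1)) :
    (k ≤ d → IsPolyLe (d - k) (lDiff g ξ) ∧ IsPolyLe (d - k) (rDiff g ξ)) ∧
    (d < k → lDiff g ξ = 0 ∧ rDiff g ξ = 0) := by
  have hgk : g ∈ degreeLowering G k := by
    simpa [Nat.sub_add_cancel hk] using lowerCentralSeries_le_degreeLowering ⊤ (k - 1) hg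
  rw [isPolyLe_iff_mem_polyLt] at hξ
  have hl := hgk _ _ hξ
  have hr := rDiff_mem_polyLt hgk hξ
  refine ⟨fun hkd => ?_, fun hdk => ?_⟩
  · rw [show d + 1 - k = d - k + 1 by omega] at hl hr
    exact ⟨hl, hr⟩
  · rw [show d + 1 - k = 0 by omega, mem_polyLt_zero] at hl hr
    exact ⟨hl, hr⟩

/-- Let `G` be a finitely generated torsion-free nilpotent group, `ξ ∈ Pol_d(G)`, and
`g ∈ γ_k(G)` (the `k`-th term of the lower central series, `k ≥ 1`; in Mathlib's
indexing `γ_k(G) = lowerCentralSeries G (k-1)`).  If `k ≤ d` then `∂_g ξ ∈ Pol_{d-k}(G)`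
and `∂'_g ξ ∈ Pol_{d-k}(G)`; if `k > d` then `∂_g ξ` and `∂'_g ξ` vanish identically. -/
theorem stmt8 {G : Type*} [Group G] [Group.FG G] (hTF : Monoid.IsTorsionFree G)
    [Group.IsNilpotent G] (d : ℕ) (ξ : G → ℝ) (hξ : IsPolyLe d ξ)
    (k : ℕ) (hk : 1 ≤ k) (g : G) (hg : g ∈ (⊤ : Subgroup G).lowerCentralSeries (k - 1)) :
    (k ≤ d → IsPolyLe (d - k) (lDiff g ξ) ∧ IsPolyLe (d - k) (rDiff g ξ)) ∧
    (d < k → lDiff g ξ = 0 ∧ rDiff g ξ = 0) :=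
  stmt8_general d ξ hξ k hk g hg
end

section
/- Let G be a finitely generated torsion-free nilpotent group and H ≤ G a subgroup of finite index. If ξ, η ∈ Pol(G) (i.e. each belongs to Pol_d(G) for some d ∈ ℕ) and ξ and η agree on H, then ξ = η. (Polynomial maps on a discrete Mal'cev group are determined by their values on a finite-index subgroup; in the paper, by their values on the subgroup generated by the degree-one elements of a Mal'cev basis, which has finite index.) -/
open Finset Polynomial

lemma fwdDiff_iter_eq_zero_of_le {M A : Type*} [AddCommMonoid M] [AddCommGroup A] {h : M}
    {F : M → A} {d k : ℕ} (hF : (fwdDiff h)^[d] F = 0) (hk : d ≤ k) : (fwdDiff h)^[k] F = 0 := by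
  obtain ⟨r, rfl⟩ := Nat.exists_eq_add_of_le hk
  rw [add_comm, Function.iterate_add_apply, hF]
  exact Function.iterate_fixed (fwdDiff_const h 0) r

section OneVariable

variable {K : Type*} [Field K] [CharZero K]

lemma exists_polynomial_eval_eq_of_fwdDiff_iter_eq_zero {F : ℤ → K} {d : ℕ}
    (hF : (fwdDiff 1)^[d] F = 0) (m : ℤ) : ∃ p : K[X], ∀ j : ℕ, p.eval (j : K) = F (m + j) := by
  set c : ℕ → K := fun k => (fwdDiff 1)^[k] F m
  -- Newton: `F (m + j) = ∑ k, j.choose k * c k`, and `j.choose k = (descPochhammer K k).eval j / k!`.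
  refine ⟨∑ k ∈ range d, C (c k / k.factorial) * descPochhammer K k, fun j => ?_⟩
  have hterm : ∀ k ∉ range d ∩ range (j + 1), (j.choose k : K) * c k = 0 := by
    intro k hk
    rcases not_and_or.mp (mem_inter.not.mp hk) with hkd | hkj
    · simp [c, fwdDiff_iter_eq_zero_of_le hF (not_lt.mp (mem_range.not.mp hkd))]
    · simp [Nat.choose_eq_zero_of_lt (not_lt.mp (mem_range.not.mp hkj))]
  calc (∑ k ∈ range d, C (c k / k.factorial) * descPochhammer K k).eval (j : K)
      = ∑ k ∈ range d, (j.choose k : K) * c k := by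
        simp only [eval_finsetSum, eval_mul, eval_C, Nat.cast_choose_eq_descPochhammer_div]
        exact sum_congr rfl fun k _ => by ring
    _ = ∑ k ∈ range (j + 1), (j.choose k : K) * c k := by
        rw [← sum_subset inter_subset_left fun k _ hk => hterm k hk,
          ← sum_subset inter_subset_right fun k _ hk => hterm k hk]
    _ = F (m + j) := by
        rw [show (j : ℤ) = j • 1 by simp, shift_eq_sum_fwdDiff_iter 1 F j m]
        simp only [nsmul_eq_mul, c]

lemma eq_zero_of_fwdDiff_iter_eq_zero_of_forall_mul {F : ℤ → K} {d n : ℕ}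
    (hF : (fwdDiff 1)^[d] F = 0) (hn : n ≠ 0) (hFn : ∀ k : ℤ, F (n * k) = 0) : F = 0 := by
  funext m
  -- Expand around `n * -|m| ∈ nℤ`, a point below `m`.
  have hbase : (n : ℤ) * -|m| ≤ m := by
    nlinarith [abs_nonneg m, neg_abs_le m, (by omega : (1 : ℤ) ≤ n)]
  obtain ⟨j, hj⟩ := Int.le.dest hbase
  obtain ⟨p, hp⟩ := exists_polynomial_eval_eq_of_fwdDiff_iter_eq_zero hF (n * -|m|)
  have hroot : ∀ t : ℕ, p.IsRoot ((n * t : ℕ) : K) := fun t => by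
    rw [IsRoot, hp]
    push_cast
    rw [← mul_add]
    exact hFn _
  have hp0 : p = 0 := p.eq_zero_of_infinite_isRoot <|
    Set.infinite_of_injective_forall_mem (Nat.cast_injective.comp (mul_right_injective₀ hn)) hroot
  rw [← hj, ← hp, hp0, eval_zero, Pi.zero_apply]

end OneVariable

section Group

variable {G : Type*} [Group G]

lemma foldr_lDiff_sub (gs : List G) (ξ η : G → ℝ) :
    gs.foldr lDiff (ξ - η) = gs.foldr lDiff ξ - gs.foldr lDiff η := by
  induction gs with
  | nil => rfl
  | cons g gs ih =>
    funext h
    simp only [List.foldr_cons, ih, lDiff, Pi.sub_apply]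
    ring

lemma foldr_lDiff_zero (gs : List G) : gs.foldr lDiff (0 : G → ℝ) = 0 := by
  simpa using foldr_lDiff_sub gs 0 0

lemma IsPolyLe.mono {d d' : ℕ} {ξ : G → ℝ} (hξ : IsPolyLe d ξ) (h : d ≤ d') :
    IsPolyLe d' ξ := by
  intro gs hgs
  rw [← List.take_append_drop (d' - d) gs, List.foldr_append,
    hξ _ (by simp only [List.length_drop, hgs]; omega), foldr_lDiff_zero]

lemma IsPolyLe.sub {d : ℕ} {ξ η : G → ℝ} (hξ : IsPolyLe d ξ) (hη : IsPolyLe d η) :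
    IsPolyLe d (ξ - η) := fun gs hgs => by
  rw [foldr_lDiff_sub, hξ gs hgs, hη gs hgs, sub_self]

lemma fwdDiff_iter_comp_zpow_neg (x : G) (r : ℕ) (φ : G → ℝ) :
    (fwdDiff 1)^[r] (fun k : ℤ => φ (x ^ (-k)))
      = fun k => (List.replicate r x).foldr lDiff φ (x ^ (-k)) := by
  induction r generalizing φ with
  | zero => rfl
  | succ r ih =>
    have hstep : fwdDiff 1 (fun k : ℤ => φ (x ^ (-k))) = fun k => lDiff x φ (x ^ (-k)) := by
      funext k
      rw [fwdDiff, lDiff, show -(k + 1) = -1 + -k by ring, zpow_add, zpow_neg_one]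
    rw [Function.iterate_succ_apply, hstep, ih, List.replicate_succ', List.foldr_append]
    rfl

lemma IsPolyLe.eq_zero_of_forall_mem {d : ℕ} {φ : G → ℝ} (hφ : IsPolyLe d φ) {H : Subgroup G}
    (hH : H.FiniteIndex) (hφH : ∀ h ∈ H, φ h = 0) : φ = 0 := by
  funext x
  obtain ⟨n, hn, -, hxn⟩ := Subgroup.exists_pow_mem_of_index_ne_zero hH.index_ne_zero x
  have hFd : (fwdDiff 1)^[d + 1] (fun k : ℤ => φ (x ^ (-k))) = 0 := by
    rw [fwdDiff_iter_comp_zpow_neg, hφ _ List.length_replicate]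
    rfl
  have hF := eq_zero_of_fwdDiff_iter_eq_zero_of_forall_mul hFd hn.ne' fun k => hφH _ <| by
    rw [← mul_neg, zpow_mul, zpow_natCast]
    exact H.zpow_mem hxn _
  simpa using congrFun hF (-1)

end Group

theorem stmt9_general {G : Type*} [Group G] (H : Subgroup G) (hH : H.FiniteIndex)
    (ξ η : G → ℝ) (hξ : ∃ d : ℕ, IsPolyLe d ξ) (hη : ∃ d : ℕ, IsPolyLe d η)
    (hagree : ∀ h ∈ H, ξ h = η h) : ξ = η := by
  obtain ⟨d₁, hξ⟩ := hξ
  obtain ⟨d₂, hη⟩ := hη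
  have hφ := (hξ.mono (le_max_left d₁ d₂)).sub (hη.mono (le_max_right d₁ d₂))
  refine sub_eq_zero.mp (hφ.eq_zero_of_forall_mem hH fun h hh => ?_)
  rw [Pi.sub_apply, hagree h hh, sub_self]

/-- Polynomial maps on a finitely generated torsion-free nilpotent group are determined
by their values on a subgroup of finite index. -/
theorem stmt9 {G : Type*} [Group G] [Group.FG G] (hTF : Monoid.IsTorsionFree G)
    [Group.IsNilpotent G] (H : Subgroup G) (hH : H.FiniteIndex)
    (ξ η : G → ℝ) (hξ : ∃ d : ℕ, IsPolyLe d ξ) (hη : ∃ d : ℕ, IsPolyLe d η)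
    (hagree : ∀ h ∈ H, ξ h = η h) : ξ = η :=
  stmt9_general H hH ξ η hξ hη hagree
end

section
/- Let G be a nilpotent group, d ∈ ℕ, and ξ ∈ Pol_d(G). Then the function F : G × G → ℝ defined by F(g,h) = ξ(g·h) belongs to Pol_d(G × G); moreover F has the same degree as ξ, i.e. for every d' ∈ ℕ, F ∈ Pol_{d'}(G × G) if and only if ξ ∈ Pol_{d'}(G). (The pull-back along the multiplication map m : G × G → G is a properly degree-preserving map on polynomial maps.) -/
namespace Stmt12Aux

set_option linter.unusedSectionVars false

variable {G : Type*} [Group G]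

lemma lDiff_zero (g : G) : lDiff g (0 : G → ℝ) = 0 := by
  funext h; simp [lDiff]

lemma lDiff_sub (g : G) (ξ₁ ξ₂ : G → ℝ) :
    lDiff g (ξ₁ - ξ₂) = lDiff g ξ₁ - lDiff g ξ₂ := by
  funext h; simp [lDiff]; ring

lemma foldr_lDiff_sub (T : List G) (ξ₁ ξ₂ : G → ℝ) :
    T.foldr lDiff (ξ₁ - ξ₂) = T.foldr lDiff ξ₁ - T.foldr lDiff ξ₂ := by
  induction T with
  | nil => rfl
  | cons t T ih => simp only [List.foldr_cons, ih, lDiff_sub]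

/-- Longer difference words also vanish. -/
lemma foldr_eq_zero_of_long {d : ℕ} {ξ : G → ℝ} (hξ : IsPolyLe d ξ) :
    ∀ gs : List G, d + 1 ≤ gs.length → gs.foldr lDiff ξ = 0 := by
  intro gs
  induction gs with
  | nil => intro h; simp at h
  | cons g gs ih =>
    intro hlen
    rcases Nat.lt_or_ge gs.length (d + 1) with hl | hl
    · have : (g :: gs).length = d + 1 := by
        simp only [List.length_cons] at hlen ⊢; omega
      exact hξ _ this
    · have h0 := ih hl
      simp only [List.foldr_cons, h0, lDiff_zero]

lemma sum_map_neg {α : Type*} (l : List α) (f : α → ℝ) :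
    (l.map (fun a => -f a)).sum = -(l.map f).sum := by
  induction l with
  | nil => simp
  | cons a l ih => simp [ih]; ring

lemma sum_flatMap {α β : Type*} (l : List α) (f : α → List β) (g : β → ℝ) :
    ((l.flatMap f).map g).sum = (l.map (fun a => ((f a).map g).sum)).sum := by
  induction l with
  | nil => simp
  | cons a l ih => simp [List.flatMap_cons, ih]

/-- Inclusion–exclusion expansion of an iterated difference word. -/
lemma foldr_lDiff_eq_sum (ψ : G → ℝ) (ws : List G) :
    ∀ x : G, ws.foldr lDiff ψ x
      = (ws.sublists'.map
          (fun s => (-1 : ℝ) ^ ws.length * (-1) ^ s.length * ψ (s.prod⁻¹ * x))).sum := by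
  induction ws with
  | nil => intro x; simp
  | cons w ws ih =>
    intro x
    have key : (w :: ws).foldr lDiff ψ x
        = ws.foldr lDiff ψ (w⁻¹ * x) - ws.foldr lDiff ψ x := rfl
    rw [key, ih, ih, List.sublists'_cons, List.map_append, List.sum_append, List.map_map]
    have h1 : (List.map (fun s => (-1 : ℝ) ^ (w :: ws).length * (-1) ^ s.length
          * ψ (s.prod⁻¹ * x)) ws.sublists').sum
        = - (List.map (fun s => (-1 : ℝ) ^ ws.length * (-1) ^ s.length
          * ψ (s.prod⁻¹ * x)) ws.sublists').sum := by
      rw [← sum_map_neg]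
      congr 1
      apply List.map_congr_left
      intro s _
      simp only [List.length_cons, pow_succ]
      ring
    have h2 : (List.map ((fun s => (-1 : ℝ) ^ (w :: ws).length * (-1) ^ s.length
          * ψ (s.prod⁻¹ * x)) ∘ List.cons w) ws.sublists').sum
        = (List.map (fun s => (-1 : ℝ) ^ ws.length * (-1) ^ s.length
          * ψ (s.prod⁻¹ * (w⁻¹ * x))) ws.sublists').sum := by
      congr 1
      apply List.map_congr_left
      intro s _
      simp only [Function.comp_apply, List.length_cons, List.prod_cons, mul_inv_rev,
        pow_succ, mul_assoc]
      ring_nf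
    rw [h1, h2]
    ring

/-- The list of "covering pairs" used to regroup the expansion. -/
def cov (fα fβ : G × G → G) : List (G × G) → List (List G × List G)
  | [] => [([], [])]
  | u :: us => (cov fα fβ us).flatMap (fun TU =>
      [(fβ u :: TU.1, TU.2), (TU.1, fα u :: TU.2), (fβ u :: TU.1, fα u :: TU.2)])

lemma cov_length (fα fβ : G × G → G) :
    ∀ us : List (G × G), ∀ TU ∈ cov fα fβ us,
      us.length ≤ TU.1.length + TU.2.length := by
  intro us
  induction us with
  | nil => intro TU hTU; simp [cov] at hTU; simp [hTU]
  | cons u us ih =>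
    intro TU hTU
    simp only [cov, List.mem_flatMap] at hTU
    obtain ⟨⟨T, U⟩, hmem, h3⟩ := hTU
    have hlen : us.length ≤ T.length + U.length := ih ⟨T, U⟩ hmem
    simp only [List.mem_cons, List.not_mem_nil, or_false] at h3
    rcases h3 with h | h | h <;> subst h <;> simp <;> omega

/-- The basic building block: a `T`-difference word applied to a shifted
`U`-difference word of `ξ`. -/
def Phi (ξ : G → ℝ) (T U : List G) (c x : G) : ℝ :=
  (T.foldr lDiff (fun z => (U.foldr lDiff ξ) (c * z))) x

lemma Phi_consT (ξ : G → ℝ) (β : G) (T U : List G) (c x : G) :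
    Phi ξ (β :: T) U c x = Phi ξ T U c (β⁻¹ * x) - Phi ξ T U c x := rfl

lemma Phi_consU (ξ : G → ℝ) (a : G) (T U : List G) (c x : G) :
    Phi ξ T (a :: U) c x = Phi ξ T U (a⁻¹ * c) x - Phi ξ T U c x := by
  unfold Phi
  have : (fun z => ((a :: U).foldr lDiff ξ) (c * z))
      = (fun z => (U.foldr lDiff ξ) ((a⁻¹ * c) * z))
        - (fun z => (U.foldr lDiff ξ) (c * z)) := by
    funext z
    simp only [List.foldr_cons, lDiff, Pi.sub_apply, mul_assoc]
  rw [this, foldr_lDiff_sub]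
  rfl

lemma sum_map_sub {α : Type*} (l : List α) (f g : α → ℝ) :
    (l.map (fun a => f a - g a)).sum = (l.map f).sum - (l.map g).sum := by
  induction l with
  | nil => simp
  | cons a l ih => simp [ih]; ring

/-- The key regrouping identity. -/
lemma claimD (ξ : G → ℝ) (fα fβ : G × G → G) (us : List (G × G)) :
    ∀ c x : G,
      (us.sublists'.map (fun s =>
          (-1 : ℝ) ^ us.length * (-1) ^ s.length *
            ξ ((s.map fα).prod⁻¹ * (c * ((s.map fβ).prod⁻¹ * x))))).sum
        = ((cov fα fβ us).map (fun TU => Phi ξ TU.1 TU.2 c x)).sum := by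
  induction us with
  | nil =>
    intro c x
    simp [cov, Phi]
  | cons u us ih =>
    intro c x
    rw [List.sublists'_cons, List.map_append, List.sum_append, List.map_map]
    have h1 : (List.map (fun s => (-1 : ℝ) ^ (u :: us).length * (-1) ^ s.length
          * ξ ((s.map fα).prod⁻¹ * (c * ((s.map fβ).prod⁻¹ * x)))) us.sublists').sum
        = - (List.map (fun s => (-1 : ℝ) ^ us.length * (-1) ^ s.length
          * ξ ((s.map fα).prod⁻¹ * (c * ((s.map fβ).prod⁻¹ * x)))) us.sublists').sum := by
      rw [← sum_map_neg]
      congr 1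
      apply List.map_congr_left
      intro s _
      simp only [List.length_cons, pow_succ]
      ring
    have h2 : (List.map ((fun s => (-1 : ℝ) ^ (u :: us).length * (-1) ^ s.length
          * ξ ((s.map fα).prod⁻¹ * (c * ((s.map fβ).prod⁻¹ * x)))) ∘ List.cons u)
            us.sublists').sum
        = (List.map (fun s => (-1 : ℝ) ^ us.length * (-1) ^ s.length
          * ξ ((s.map fα).prod⁻¹ * (((fα u)⁻¹ * c)
              * ((s.map fβ).prod⁻¹ * ((fβ u)⁻¹ * x))))) us.sublists').sum := by
      congr 1
      apply List.map_congr_left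
      intro s _
      simp only [Function.comp_apply, List.length_cons, List.map_cons, List.prod_cons,
        mul_inv_rev, pow_succ, mul_assoc]
      ring_nf
    rw [h1, h2, ih, ih]
    have h3 : ((cov fα fβ (u :: us)).map (fun TU => Phi ξ TU.1 TU.2 c x)).sum
        = ((cov fα fβ us).map (fun TU =>
            Phi ξ TU.1 TU.2 ((fα u)⁻¹ * c) ((fβ u)⁻¹ * x) - Phi ξ TU.1 TU.2 c x)).sum := by
      show (((cov fα fβ us).flatMap _).map _).sum = _
      rw [sum_flatMap]
      congr 1
      apply List.map_congr_left
      rintro ⟨T, U⟩ _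
      simp only [List.map_cons, List.map_nil, List.sum_cons, List.sum_nil, add_zero]
      simp only [Phi_consT, Phi_consU]
      ring
    rw [h3, sum_map_sub]
    ring

lemma prod_fst (s : List (G × G)) : (s.prod).1 = (s.map Prod.fst).prod := by
  induction s with
  | nil => rfl
  | cons u s ih => simp [ih]

lemma prod_snd (s : List (G × G)) : (s.prod).2 = (s.map Prod.snd).prod := by
  induction s with
  | nil => rfl
  | cons u s ih => simp [ih]

lemma prod_conj (g : G) (s : List (G × G)) :
    (s.map (fun u : G × G => g * u.2 * g⁻¹)).prod = g * (s.map Prod.snd).prod * g⁻¹ := by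
  induction s with
  | nil => simp
  | cons u s ih =>
    simp only [List.map_cons, List.prod_cons, ih]
    group

/-- The hard direction: the pull-back of a polynomial of degree `≤ d` along
multiplication is a polynomial of degree `≤ d` on `G × G`. -/
lemma hard {d : ℕ} {ξ : G → ℝ} (hξ : IsPolyLe d ξ) :
    IsPolyLe d (fun p : G × G => ξ (p.1 * p.2)) := by
  intro us hlen
  funext p
  obtain ⟨g, h⟩ := p
  have expand := foldr_lDiff_eq_sum (fun p : G × G => ξ (p.1 * p.2)) us (g, h)
  have step : (us.sublists'.map (fun s => (-1 : ℝ) ^ us.length * (-1) ^ s.length *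
        ξ ((s.prod⁻¹ * (g, h)).1 * (s.prod⁻¹ * (g, h)).2))).sum
      = (us.sublists'.map (fun s =>
          (-1 : ℝ) ^ us.length * (-1) ^ s.length *
            ξ ((s.map Prod.fst).prod⁻¹ *
              (1 * ((s.map (fun u : G × G => g * u.2 * g⁻¹)).prod⁻¹ * (g * h)))))).sum := by
    congr 1
    apply List.map_congr_left
    intro s _
    have harg : (s.prod⁻¹ * (g, h)).1 * (s.prod⁻¹ * (g, h)).2
        = (s.map Prod.fst).prod⁻¹ *
            (1 * ((s.map (fun u : G × G => g * u.2 * g⁻¹)).prod⁻¹ * (g * h))) := by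
      rw [prod_conj]
      simp only [Prod.fst_mul, Prod.snd_mul, Prod.fst_inv, Prod.snd_inv,
        prod_fst, prod_snd]
      group
    rw [harg]
  rw [expand, step, claimD ξ Prod.fst (fun u : G × G => g * u.2 * g⁻¹) us 1 (g * h)]
  show _ = (0 : ℝ)
  apply List.sum_eq_zero
  intro r hr
  rw [List.mem_map] at hr
  obtain ⟨⟨T, U⟩, hmem, hr⟩ := hr
  subst hr
  have hlen2 : d + 1 ≤ (T ++ U).length := by
    have hc : us.length ≤ T.length + U.length :=
      cov_length (G := G) Prod.fst (fun u : G × G => g * u.2 * g⁻¹) us ⟨T, U⟩ hmem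
    simp only [List.length_append]
    omega
  have hΦ : Phi ξ T U 1 (g * h) = ((T ++ U).foldr lDiff ξ) (g * h) := by
    unfold Phi
    rw [List.foldr_append]
    have : (fun z => List.foldr lDiff ξ U (1 * z)) = List.foldr lDiff ξ U := by
      funext z; rw [one_mul]
    rw [this]
  rw [hΦ, foldr_eq_zero_of_long hξ _ hlen2]
  rfl

/-- The easy direction: restriction to the first coordinate. -/
lemma foldr_map_pair (ξ : G → ℝ) (gs : List G) :
    (gs.map (fun g => ((g, 1) : G × G))).foldr lDiff (fun p : G × G => ξ (p.1 * p.2))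
      = fun p : G × G => (gs.foldr lDiff ξ) (p.1 * p.2) := by
  induction gs with
  | nil => rfl
  | cons g gs ih =>
    simp only [List.map_cons, List.foldr_cons, ih]
    funext p
    simp [lDiff, mul_assoc]

end Stmt12Aux

/-- For a nilpotent group `G`, the pull-back `F(g,h) = ξ(gh)` of a polynomial map
`ξ ∈ Pol_d(G)` along the multiplication map lies in `Pol_d(G × G)`, and has the same
degree as `ξ`. -/
theorem stmt12 {G : Type*} [Group G] [Group.IsNilpotent G] (d : ℕ) (ξ : G → ℝ)
    (hξ : IsPolyLe d ξ) :
    IsPolyLe d (fun p : G × G => ξ (p.1 * p.2)) ∧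
    ∀ d' : ℕ, (IsPolyLe d' (fun p : G × G => ξ (p.1 * p.2)) ↔ IsPolyLe d' ξ) := by
  refine ⟨Stmt12Aux.hard hξ, fun d' => ⟨fun hF gs hlen => ?_, fun hξ' => Stmt12Aux.hard hξ'⟩⟩
  have h0 := hF (gs.map (fun g => ((g, 1) : G × G))) (by simpa using hlen)
  rw [Stmt12Aux.foldr_map_pair] at h0
  funext x
  have := congrFun h0 (x, 1)
  simpa using this
end

section
/- Let G be a finitely generated torsion-free nilpotent group and d ∈ ℕ. Then Pol_d(G) is a finite-dimensional ℝ-linear subspace of the space of all functions G → ℝ. -/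
/-!
The map `ξ ↦ ((∂_s ξ)_{s ∈ S}, ξ 1)`, for a finite generating set `S`, is injective: if every
`∂_s ξ` vanishes then `ξ` is invariant under the subgroup generated by `S`, hence constant. It
sends `Pol_{d+1}(G)` into `Pol_d(G)^S × ℝ`, so finite-dimensionality follows by induction on `d`.
-/

section

variable {G : Type*} [Group G]

def lDiffₗ (g : G) : (G → ℝ) →ₗ[ℝ] G → ℝ :=
  LinearMap.funLeft ℝ ℝ (g⁻¹ * ·) - LinearMap.id

@[simp]
theorem coe_lDiffₗ (g : G) : ⇑(lDiffₗ g) = lDiff g := rfl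

theorem foldr_lDiff_eq_prod_map (gs : List G) (ξ : G → ℝ) :
    gs.foldr lDiff ξ = (gs.map lDiffₗ).prod ξ := by
  induction gs with
  | nil => rfl
  | cons g gs ih => simp [ih, Module.End.mul_apply]

theorem IsPolyLe.isPolyLe_lDiff {d : ℕ} {ξ : G → ℝ} (hξ : IsPolyLe (d + 1) ξ) (s : G) :
    IsPolyLe d (lDiff s ξ) := by
  intro gs hgs
  simpa [List.foldr_append] using hξ (gs ++ [s]) (by simp [hgs])

theorem IsPolyLe.lDiff_eq_zero {ξ : G → ℝ} (hξ : IsPolyLe 0 ξ) (g : G) : lDiff g ξ = 0 :=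
  hξ [g] rfl

theorem apply_eq_apply_one_of_lDiff_eq_zero {S : Set G} (hS : Subgroup.closure S = ⊤)
    {ξ : G → ℝ} (hξ : ∀ s ∈ S, lDiff s ξ = 0) (x : G) : ξ x = ξ 1 := by
  have invariant : ∀ g ∈ Subgroup.closure S, ∀ h, ξ (g⁻¹ * h) = ξ h := by
    intro g hg
    induction hg using Subgroup.closure_induction with
    | mem s hs => exact fun h => sub_eq_zero.mp (congrFun (hξ s hs) h)
    | one => simp
    | mul a b _ _ ha hb => intro h; rw [mul_inv_rev, mul_assoc, hb, ha]
    | inv a _ ha => intro h; rw [inv_inv, ← ha (a * h), inv_mul_cancel_left]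
  simpa using invariant x⁻¹ (hS ▸ Subgroup.mem_top _) 1

def polSubmodule (G : Type*) [Group G] (d : ℕ) : Submodule ℝ (G → ℝ) :=
  ⨅ (gs : List G) (_ : gs.length = d + 1), LinearMap.ker (gs.map lDiffₗ).prod

theorem mem_polSubmodule {d : ℕ} {ξ : G → ℝ} : ξ ∈ polSubmodule G d ↔ IsPolyLe d ξ := by
  simp [polSubmodule, IsPolyLe, foldr_lDiff_eq_prod_map]

theorem finiteDimensional_of_forall_lDiff_mem {S : Finset G}
    (hS : Subgroup.closure (S : Set G) = ⊤)
    {P Q : Submodule ℝ (G → ℝ)} [FiniteDimensional ℝ Q]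
    (hPQ : ∀ ξ ∈ P, ∀ s ∈ S, lDiff s ξ ∈ Q) : FiniteDimensional ℝ P := by
  let Φ : P →ₗ[ℝ] (S → Q) × ℝ :=
    (LinearMap.pi fun s => (lDiffₗ s.1).restrict fun ξ hξ => hPQ ξ hξ s.1 s.2).prod
      ((LinearMap.proj 1).comp P.subtype)
  refine FiniteDimensional.of_injective Φ fun ξ η hξη => ?_
  rw [← sub_eq_zero, ← map_sub] at hξη
  obtain ⟨hdiff, hone⟩ := Prod.ext_iff.mp hξη
  have hconst := apply_eq_apply_one_of_lDiff_eq_zero hS (ξ := (ξ - η : P))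
    fun s hs => congrArg Subtype.val (congrFun hdiff ⟨s, hs⟩)
  exact sub_eq_zero.mp (Subtype.ext (funext fun x => (hconst x).trans hone))

theorem finiteDimensional_polSubmodule (G : Type*) [Group G] [Group.FG G] (d : ℕ) :
    FiniteDimensional ℝ (polSubmodule G d) := by
  obtain ⟨S, hS⟩ := Group.FG.out (G := G)
  induction d with
  | zero =>
    refine finiteDimensional_of_forall_lDiff_mem (Q := ⊥) hS fun ξ hξ s _ => ?_
    exact (Submodule.mem_bot ℝ).mpr ((mem_polSubmodule.mp hξ).lDiff_eq_zero s)
  | succ d ih =>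
    exact finiteDimensional_of_forall_lDiff_mem hS fun ξ hξ s _ =>
      mem_polSubmodule.mpr ((mem_polSubmodule.mp hξ).isPolyLe_lDiff s)

end

theorem stmt13_general {G : Type*} [Group G] [Group.FG G] (d : ℕ) :
    ∃ S : Submodule ℝ (G → ℝ), (S : Set (G → ℝ)) = {ξ : G → ℝ | IsPolyLe d ξ} ∧
      FiniteDimensional ℝ S :=
  ⟨polSubmodule G d, Set.ext fun _ => mem_polSubmodule, finiteDimensional_polSubmodule G d⟩

/-- For a finitely generated torsion-free nilpotent group `G`, `Pol_d(G)` is a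
finite-dimensional `ℝ`-linear subspace of the space of all functions `G → ℝ`. -/
theorem stmt13 {G : Type*} [Group G] [Group.FG G] (hTF : Monoid.IsTorsionFree G)
    [Group.IsNilpotent G] (d : ℕ) :
    ∃ S : Submodule ℝ (G → ℝ), (S : Set (G → ℝ)) = {ξ : G → ℝ | IsPolyLe d ξ} ∧
      FiniteDimensional ℝ S :=
  stmt13_general d
end

section
/- Let G be a topological group such that the abelianization of G is compact, i.e. the quotient topological group of G by the closure of its commutator subgroup is compact. Let E be a Hausdorff topological real vector space equipped with an ℝ-linear action of G whose action map G × E → E is continuous (a continuous G-module). Let d ≥ 1 and let ξ ∈ E satisfy (∂_{g₁} ∘ ⋯ ∘ ∂_{g_d})(ξ) = 0 for all g₁, …, g_d ∈ G, where ∂_g ξ := g•ξ − ξ ∈ E. Then g•ξ = ξ for all g ∈ G. (For groups with compact abelianization, the higher order invariants E^{G(d)} coincide with the invariants E^G for every continuous G-module E.) -/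
/-!
If all second differences of `η` vanish, then `g ↦ g • η - η` is a continuous homomorphism
from `G` to the additive group of `E`. It kills the closure of the commutator subgroup, so it
factors through the compact abelianization and has compact image. That image contains
`n • (g • η - η)` for every `n : ℕ`, and a compact (hence bounded) subset of a Hausdorff
topological vector space contains no nonzero ray, so `g • η = η`. Induction on `d` lowers the
order of the vanishing differences one step at a time.
-/

open Filter Topology

theorem eq_zero_of_forall_nsmul_mem_of_isCompact {E : Type*} [AddCommGroup E] [Module ℝ E]
    [TopologicalSpace E] [T2Space E] [IsTopologicalAddGroup E] [ContinuousSMul ℝ E]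
    {K : Set E} (hK : IsCompact K) {v : E} (hv : ∀ n : ℕ, n • v ∈ K) : v = 0 := by
  have hlim : Tendsto (fun n : ℕ => (n : ℝ)⁻¹ • n • v) atTop (𝓝 0) :=
    (hK.isVonNBounded ℝ).smul_tendsto_zero (.of_forall hv) tendsto_inv_atTop_nhds_zero_nat
  have heq : (fun n : ℕ => (n : ℝ)⁻¹ • n • v) =ᶠ[atTop] fun _ => v := by
    filter_upwards [eventually_ne_atTop 0] with n hn
    rw [← Nat.cast_smul_eq_nsmul ℝ, inv_smul_smul₀ (Nat.cast_ne_zero.mpr hn)]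
  exact tendsto_nhds_unique (tendsto_const_nhds.congr' heq.symm) hlim

instance {X : Type*} [TopologicalSpace X] [T1Space X] : T1Space (Multiplicative X) :=
  ‹T1Space X›

theorem MonoidHom.isCompact_range_of_continuous {G A : Type*} [Group G] [TopologicalSpace G]
    [IsTopologicalGroup G] [CompactSpace (G ⧸ (commutator G).topologicalClosure)]
    [CommGroup A] [TopologicalSpace A] [T1Space A] (f : G →* A) (hf : Continuous f) :
    IsCompact (Set.range f) := by
  have hker : (commutator G).topologicalClosure ≤ f.ker :=
    Subgroup.topologicalClosure_minimal _ (Abelianization.commutator_subset_ker f)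
      (isClosed_singleton.preimage hf)
  have hrange : Set.range f = Set.range (QuotientGroup.lift _ f hker) := by
    rw [← QuotientGroup.mk_surjective.range_comp]
    rfl
  rw [hrange]
  exact isCompact_range (hf.quotient_lift _)

section Difference

variable {G E : Type*} [Group G] [AddCommGroup E] [DistribMulAction G E]

def differenceHom (η : E) (h : ∀ a b : G, a • (b • η - η) = b • η - η) :
    G →* Multiplicative E where
  toFun g := Multiplicative.ofAdd (g • η - η)
  map_one' := by simp
  map_mul' a b := by
    rw [← ofAdd_add, mul_smul, ← h a b]
    congr 1
    simp only [smul_sub]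
    abel

theorem continuous_differenceHom [TopologicalSpace G] [TopologicalSpace E] [ContinuousSMul G E]
    [ContinuousSub E] (η : E) (h : ∀ a b : G, a • (b • η - η) = b • η - η) :
    Continuous (differenceHom η h) :=
  continuous_ofAdd.comp ((continuous_id.smul continuous_const).sub continuous_const)

end Difference

section CompactAbelianization

variable {G : Type*} [Group G] [TopologicalSpace G] [IsTopologicalGroup G]
  [CompactSpace (G ⧸ (commutator G).topologicalClosure)]
  {E : Type*} [AddCommGroup E] [Module ℝ E] [TopologicalSpace E] [T2Space E]
  [IsTopologicalAddGroup E] [ContinuousSMul ℝ E] [DistribMulAction G E] [ContinuousSMul G E]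

theorem smul_eq_self_of_forall_smul_smul_sub_self (η : E) (h : ∀ a b : G, a • (b • η - η) = b • η - η) (g : G) : g • η = η := by
  have hK := ((differenceHom η h).isCompact_range_of_continuous
    (continuous_differenceHom η h)).image continuous_toAdd
  refine sub_eq_zero.mp (eq_zero_of_forall_nsmul_mem_of_isCompact hK fun n => ?_)
  exact ⟨_, ⟨g ^ n, rfl⟩, by rw [map_pow, toAdd_pow]; rfl⟩

theorem foldr_smul_sub_eq_zero_of_length_succ {ξ : E} {n : ℕ}
    (h : ∀ gs : List G, gs.length = n + 2 → gs.foldr (fun g x => g • x - x) ξ = 0)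
    (gs : List G) (hgs : gs.length = n + 1) : gs.foldr (fun g x => g • x - x) ξ = 0 := by
  obtain _ | ⟨g, rest⟩ := gs
  · simp at hgs
  have hfixed := smul_eq_self_of_forall_smul_smul_sub_self (rest.foldr (fun g x => g • x - x) ξ)
    fun a b => sub_eq_zero.mp (h (a :: b :: rest) (by simpa using hgs))
  rw [List.foldr_cons, hfixed, sub_self]

end CompactAbelianization

theorem stmt16_general {G : Type*} [Group G] [TopologicalSpace G] [IsTopologicalGroup G]
    (hcomp : CompactSpace (G ⧸ (commutator G).topologicalClosure))
    {E : Type*} [AddCommGroup E] [Module ℝ E] [TopologicalSpace E] [T2Space E]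
    [IsTopologicalAddGroup E] [ContinuousSMul ℝ E]
    [DistribMulAction G E] [ContinuousSMul G E]
    (d : ℕ) (ξ : E)
    (h : ∀ gs : List G, gs.length = d →
      gs.foldr (fun g x => g • x - x) ξ = 0) :
    ∀ g : G, g • ξ = ξ := by
  intro g
  cases d with
  | zero => simp [show ξ = 0 from h [] rfl]
  | succ n =>
    induction n with
    | zero => exact sub_eq_zero.mp (h [g] rfl)
    | succ n ih => exact ih (foldr_smul_sub_eq_zero_of_length_succ h)

/-- For a group `G` with compact abelianization (compact quotient by the closure of
the commutator subgroup) and any continuous `G`-module `E`, the higher order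
invariants coincide with the invariants: any `ξ ∈ E` all of whose `d`-fold iterated
differences `∂_g ξ = g • ξ - ξ` vanish is `G`-fixed. -/
theorem stmt16 {G : Type*} [Group G] [TopologicalSpace G] [IsTopologicalGroup G]
    (hcomp : CompactSpace (G ⧸ (commutator G).topologicalClosure))
    {E : Type*} [AddCommGroup E] [Module ℝ E] [TopologicalSpace E] [T2Space E]
    [IsTopologicalAddGroup E] [ContinuousSMul ℝ E]
    [DistribMulAction G E] [SMulCommClass G ℝ E] [ContinuousSMul G E]
    (d : ℕ) (hd : 1 ≤ d) (ξ : E)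
    (h : ∀ gs : List G, gs.length = d →
      gs.foldr (fun g x => g • x - x) ξ = 0) :
    ∀ g : G, g • ξ = ξ :=
  stmt16_general hcomp d ξ h
end

section
/- Let G be a locally compact Hausdorff topological group, E a Hausdorff locally convex real topological vector space, and π a representation of G on E by continuous linear automorphisms such that for every compact subset K ⊆ G the family of operators {π(g) : g ∈ K} is equicontinuous (a locally equicontinuous G-module). Then the set 𝒞E := {ξ ∈ E : the orbit map g ↦ π(g)ξ is continuous} is a closed ℝ-linear subspace of E, invariant under π(g) for every g ∈ G, and the action map G × 𝒞E → 𝒞E, (g, ξ) ↦ π(g)ξ, is continuous when 𝒞E carries the subspace topology. -/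
/-!
If `T x` is equicontinuous at `0` for `x` near `x₀`, then `T x ξ - T x₀ ξ` is, for `x` near `x₀`,
the sum of `T x (ξ - ξ') - T x₀ (ξ - ξ')`, which is small as soon as `ξ'` is close to `ξ`, and of
`T x ξ' - T x₀ ξ'`. Taking `ξ'` with continuous orbit shows that the vectors with continuous orbit
form a closed set; taking `ξ' = ξ₀` and `ξ` near `ξ₀` gives joint continuity of `(x, ξ) ↦ T x ξ`.
For a representation of a locally compact group, equicontinuity on compact sets provides the
required local equicontinuity.
-/

open Filter Topology

section OrbitContinuity

variable {X E F 𝓕 : Type*} [TopologicalSpace X]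
  [AddCommGroup E] [TopologicalSpace E] [IsTopologicalAddGroup E]
  [AddCommGroup F] [TopologicalSpace F] [IsTopologicalAddGroup F]
  [FunLike 𝓕 E F] [AddMonoidHomClass 𝓕 E F] {T : X → 𝓕} {x₀ : X}

/- Joint continuity of `(x, ξ) ↦ T x ξ` at `(x₀, 0)` says exactly that the maps `T x`, for `x` in
some neighbourhood of `x₀`, are equicontinuous at `0`. -/
theorem isClosed_setOf_continuousAt_apply
    (h0 : ContinuousAt (fun p : X × E => T p.1 p.2) (x₀, 0)) :
    IsClosed {ξ : E | ContinuousAt (fun x => T x ξ) x₀} := by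
  refine isClosed_of_closure_subset fun ξ hξ => ?_
  have hD : Tendsto (fun p : X × E => T p.1 p.2 - T x₀ p.2) (𝓝 x₀ ×ˢ 𝓝 0) (𝓝 0) := by
    have h0' : Tendsto (fun p : X × E => T p.1 p.2) (𝓝 x₀ ×ˢ 𝓝 0) (𝓝 0) := by
      simpa only [ContinuousAt, nhds_prod_eq, map_zero] using h0
    simpa only [Function.comp_def, sub_zero] using
      h0'.sub (h0'.comp (tendsto_const_nhds.prodMk tendsto_snd))
  rw [Set.mem_ofPred_eq, ContinuousAt, ← tendsto_sub_nhds_zero_iff]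
  refine fun V hV => show ∀ᶠ x in 𝓝 x₀, T x ξ - T x₀ ξ ∈ V from ?_
  obtain ⟨W, hW, hWV⟩ := exists_nhds_zero_half hV
  obtain ⟨N, hN, U, hU, hNU⟩ := mem_prod_iff.1 (hD hW)
  have hξU : {η : E | ξ - η ∈ U} ∈ 𝓝 ξ :=
    (continuous_const.sub continuous_id).tendsto' ξ 0 (sub_self ξ) hU
  obtain ⟨ξ', hξξ', hξ'⟩ := mem_closure_iff_nhds.1 hξ _ hξU
  have hξ'W : ∀ᶠ x in 𝓝 x₀, T x ξ' - T x₀ ξ' ∈ W := tendsto_sub_nhds_zero_iff.2 hξ' hW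
  filter_upwards [hN, hξ'W] with x hx hx'
  have hsplit : T x ξ - T x₀ ξ =
      (T x (ξ - ξ') - T x₀ (ξ - ξ')) + (T x ξ' - T x₀ ξ') := by
    simp only [map_sub]
    abel
  rw [hsplit]
  exact hWV _ (hNU (Set.mk_mem_prod hx hξξ')) _ hx'

theorem isClosed_setOf_continuous_apply
    (h0 : ∀ x₀ : X, ContinuousAt (fun p : X × E => T p.1 p.2) (x₀, 0)) :
    IsClosed {ξ : E | Continuous fun x => T x ξ} := by
  simp only [continuous_iff_continuousAt, Set.ofPred_forall]
  exact isClosed_iInter fun x₀ => isClosed_setOf_continuousAt_apply (h0 x₀)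

theorem continuousAt_apply_of_continuousAt_orbit {ξ₀ : E}
    (h0 : ContinuousAt (fun p : X × E => T p.1 p.2) (x₀, 0))
    (hξ₀ : ContinuousAt (fun x => T x ξ₀) x₀) :
    ContinuousAt (fun p : X × E => T p.1 p.2) (x₀, ξ₀) := by
  have hshift : Tendsto (fun p : X × E => (p.1, p.2 - ξ₀)) (𝓝 (x₀, ξ₀)) (𝓝 (x₀, 0)) := by
    have hcont : Continuous fun p : X × E => (p.1, p.2 - ξ₀) := by fun_prop
    simpa only [sub_self] using hcont.tendsto (x₀, ξ₀)
  have hsum := (h0.tendsto.comp hshift).add (hξ₀.tendsto.comp continuous_fst.continuousAt)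
  simpa only [ContinuousAt, Function.comp_def, map_zero, zero_add, ← map_add, sub_add_cancel]
    using hsum

theorem continuous_apply_setOf_continuous_apply
    (h0 : ∀ x₀ : X, ContinuousAt (fun p : X × E => T p.1 p.2) (x₀, 0)) :
    Continuous fun p : X × {ξ : E | Continuous fun x => T x ξ} => T p.1 p.2 := by
  refine continuous_iff_continuousAt.2 fun p => ?_
  have hincl : Continuous fun p : X × {ξ : E | Continuous fun x => T x ξ} => (p.1, (p.2 : E)) :=
    continuous_fst.prodMk (continuous_subtype_val.comp continuous_snd)
  exact (continuousAt_apply_of_continuousAt_orbit (h0 p.1) (p.2.2.continuousAt)).comp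
    (x := p) hincl.continuousAt

end OrbitContinuity

section ContinuousVectors

variable {R E F 𝓕 X : Type*} [Semiring R] [AddCommMonoid E] [Module R E]
  [AddCommMonoid F] [Module R F] [TopologicalSpace F] [ContinuousAdd F] [ContinuousConstSMul R F]
  [FunLike 𝓕 E F] [LinearMapClass 𝓕 R E F] [TopologicalSpace X]

variable (R) in
def continuousVectors (T : X → 𝓕) : Submodule R E where
  carrier := {ξ | Continuous fun x => T x ξ}
  add_mem' {a b} (ha : Continuous _) (hb : Continuous _) :=
    show Continuous fun x => T x (a + b) by
      simp only [map_add]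
      exact ha.add hb
  zero_mem' := show Continuous fun x => T x 0 by simpa only [map_zero] using continuous_const
  smul_mem' c ξ (h : Continuous _) :=
    show Continuous fun x => T x (c • ξ) by
      simp only [map_smul]
      exact h.const_smul c

end ContinuousVectors

theorem stmt17_general {G : Type*} [Group G] [TopologicalSpace G] [IsTopologicalGroup G]
    [LocallyCompactSpace G]
    {E : Type*} [AddCommGroup E] [Module ℝ E] [TopologicalSpace E]
    [IsTopologicalAddGroup E] [ContinuousSMul ℝ E]
    (π : G →* (E ≃L[ℝ] E))
    (heq : ∀ K : Set G, IsCompact K → ∀ V ∈ nhds (0 : E), ∃ U ∈ nhds (0 : E),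
      ∀ g ∈ K, ∀ x ∈ U, π g x ∈ V) :
    IsClosed {ξ : E | Continuous fun g : G => π g ξ} ∧
    (∃ S : Submodule ℝ E, (S : Set E) = {ξ : E | Continuous fun g : G => π g ξ}) ∧
    (∀ g : G, ∀ ξ : E, (Continuous fun g' : G => π g' ξ) →
      Continuous fun g' : G => π g' (π g ξ)) ∧
    Continuous (fun p : G × {ξ : E | Continuous fun g : G => π g ξ} =>
      π p.1 (p.2 : E)) := by
  have h0 : ∀ g₀ : G, ContinuousAt (fun p : G × E => π p.1 p.2) (g₀, 0) := by
    refine fun g₀ V hV => show ∀ᶠ p in 𝓝 (g₀, 0), π p.1 p.2 ∈ V from ?_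
    obtain ⟨K, hK, hKg₀⟩ := exists_compact_mem_nhds g₀
    obtain ⟨U, hU, hKU⟩ := heq K hK V (by simpa only [map_zero] using hV)
    exact mem_of_superset (prod_mem_nhds hKg₀ hU) fun p hp => hKU p.1 hp.1 p.2 hp.2
  have hmul : ∀ g g' : G, ∀ ξ : E, π (g' * g) ξ = π g' (π g ξ) := fun g g' ξ => by
    rw [map_mul]
    rfl
  refine ⟨isClosed_setOf_continuous_apply h0, ⟨continuousVectors ℝ π, rfl⟩,
    fun g ξ hξ => ?_, continuous_apply_setOf_continuous_apply h0⟩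
  simpa only [Function.comp_def, hmul] using hξ.comp (continuous_mul_const g)

/-- Continuous vectors of a locally equicontinuous module: for a representation `π` of a
locally compact Hausdorff group `G` on a Hausdorff locally convex real topological vector
space `E` by continuous linear automorphisms which is equicontinuous on every compact
subset of `G`, the set `𝒞E` of vectors with continuous orbit map is a closed, invariant,
`ℝ`-linear subspace of `E`, and the action map `G × 𝒞E → 𝒞E` is continuous (with `𝒞E`
carrying the subspace topology). -/
theorem stmt17 {G : Type*} [Group G] [TopologicalSpace G] [IsTopologicalGroup G]
    [LocallyCompactSpace G] [T2Space G]
    {E : Type*} [AddCommGroup E] [Module ℝ E] [TopologicalSpace E]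
    [IsTopologicalAddGroup E] [ContinuousSMul ℝ E] [T2Space E] [LocallyConvexSpace ℝ E]
    (π : G →* (E ≃L[ℝ] E))
    (heq : ∀ K : Set G, IsCompact K → ∀ V ∈ nhds (0 : E), ∃ U ∈ nhds (0 : E),
      ∀ g ∈ K, ∀ x ∈ U, π g x ∈ V) :
    IsClosed {ξ : E | Continuous fun g : G => π g ξ} ∧
    (∃ S : Submodule ℝ E, (S : Set E) = {ξ : E | Continuous fun g : G => π g ξ}) ∧
    (∀ g : G, ∀ ξ : E, (Continuous fun g' : G => π g' ξ) →
      Continuous fun g' : G => π g' (π g ξ)) ∧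
    Continuous (fun p : G × {ξ : E | Continuous fun g : G => π g ξ} =>
      π p.1 (p.2 : E)) :=
  stmt17_general π heq
end
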